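/- arXiv:1705.05187 — 11 statements merged into one kernel-verified Lean document; each statement's English description precedes it below -/
import Mathlib

section
/- Let A = (a_{i_1...i_m}) be a real tensor of order m and dimension n (m, n ≥ 2). Then every Z-eigenvalue λ of A lies in the set Ω(A): that is, there exist indices i, j ∈ N = {1,...,n} with i ≠ j such that either (|λ| < P_i^j(A) and |λ| < P_j^i(A)), or (|λ| ≤ R_i(A) and (|λ| − P_i^j(A))·(|λ| − P_j^i(A)) ≤ (R_i(A) − P_i^j(A))·(R_j(A) − P_j^i(A))). -/
open Finset

/- A real tensor of order `m` and dimension `n` is encoded by its entries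
`a i g`, where `i : Fin n` is the first index and `g : Fin (m-1) → Fin n`
gives the remaining `m-1` indices. -/

/-- `tR m n a i = R_i(A) = Σ_{i_2,...,i_m} |a_{i i_2 ... i_m}|`. -/
noncomputable def tR (m n : ℕ) (a : Fin n → (Fin (m-1) → Fin n) → ℝ) (i : Fin n) : ℝ :=
  ∑ g : Fin (m-1) → Fin n, |a i g|

/-- `tP m n a i j = P_i^j(A) = Σ_{i_2,...,i_m, j ∉ {i_2,...,i_m}} |a_{i i_2 ... i_m}|`. -/
noncomputable def tP (m n : ℕ) (a : Fin n → (Fin (m-1) → Fin n) → ℝ) (i j : Fin n) : ℝ :=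
  ∑ g ∈ Finset.univ.filter (fun g : Fin (m-1) → Fin n => ∀ k, g k ≠ j), |a i g|

/-- `(A x^{m-1})_i = Σ_{i_2,...,i_m} a_{i i_2...i_m} x_{i_2} ⋯ x_{i_m}`. -/
noncomputable def tAx (m n : ℕ) (a : Fin n → (Fin (m-1) → Fin n) → ℝ)
    (x : Fin n → ℝ) (i : Fin n) : ℝ :=
  ∑ g : Fin (m-1) → Fin n, a i g * ∏ k, x (g k)

/-- `λ` is a Z-eigenvalue of `A` with Z-eigenvector `x`: `A x^{m-1} = λ x` and `xᵀ x = 1`. -/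
def IsZEigenpair (m n : ℕ) (a : Fin n → (Fin (m-1) → Fin n) → ℝ)
    (lam : ℝ) (x : Fin n → ℝ) : Prop :=
  (∀ i, tAx m n a x i = lam * x i) ∧ ∑ i, x i ^ 2 = 1

lemma prod_abs_le_single {m' n : ℕ} (x : Fin n → ℝ) (hx1 : ∀ i, |x i| ≤ 1)
    (g : Fin m' → Fin n) (k0 : Fin m') :
    ∏ k, |x (g k)| ≤ |x (g k0)| := by
  rw [← Finset.mul_prod_erase _ _ (mem_univ k0)]
  calc |x (g k0)| * ∏ k ∈ univ.erase k0, |x (g k)|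
      ≤ |x (g k0)| * 1 := by
        apply mul_le_mul_of_nonneg_left _ (abs_nonneg _)
        exact Finset.prod_le_one (fun k _ => abs_nonneg _) (fun k _ => hx1 _)
    _ = |x (g k0)| := mul_one _

lemma tP_nonneg (m n : ℕ) (a : Fin n → (Fin (m-1) → Fin n) → ℝ) (i j : Fin n) :
    0 ≤ tP m n a i j :=
  Finset.sum_nonneg fun g _ => abs_nonneg _

lemma tP_le_tR (m n : ℕ) (a : Fin n → (Fin (m-1) → Fin n) → ℝ) (i j : Fin n) :
    tP m n a i j ≤ tR m n a i :=
  Finset.sum_le_sum_of_subset_of_nonneg (filter_subset _ _) (fun g _ _ => abs_nonneg _)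

lemma tAx_bound (m n : ℕ) (hm : 2 ≤ m) (a : Fin n → (Fin (m-1) → Fin n) → ℝ)
    (x : Fin n → ℝ) (hx1 : ∀ i, |x i| ≤ 1) (i j : Fin n) (u v : ℝ)
    (hu : ∀ p : Fin n, p ≠ j → |x p| ≤ u) (hvj : |x j| ≤ v) :
    |tAx m n a x i| ≤ tP m n a i j * u + (tR m n a i - tP m n a i j) * v := by
  have hsplit : tP m n a i j +
      (∑ g ∈ Finset.univ.filter (fun g : Fin (m-1) → Fin n => ¬ ∀ k, g k ≠ j), |a i g|)
      = tR m n a i := Finset.sum_filter_add_sum_filter_not _ _ _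
  have hk0 : 0 < m - 1 := by omega
  calc |tAx m n a x i| ≤ ∑ g : Fin (m-1) → Fin n, |a i g * ∏ k, x (g k)| :=
        Finset.abs_sum_le_sum_abs _ _
    _ = ∑ g : Fin (m-1) → Fin n, |a i g| * ∏ k, |x (g k)| := by
        simp [abs_mul, Finset.abs_prod]
    _ = (∑ g ∈ Finset.univ.filter (fun g : Fin (m-1) → Fin n => ∀ k, g k ≠ j),
          |a i g| * ∏ k, |x (g k)|)
        + ∑ g ∈ Finset.univ.filter (fun g : Fin (m-1) → Fin n => ¬ ∀ k, g k ≠ j),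
          |a i g| * ∏ k, |x (g k)| :=
        (Finset.sum_filter_add_sum_filter_not _ _ _).symm
    _ ≤ tP m n a i j * u + (tR m n a i - tP m n a i j) * v := by
        rw [← hsplit]; ring_nf
        gcongr ?_ + ?_
        · rw [tP, Finset.sum_mul]
          apply Finset.sum_le_sum
          intro g hg
          rw [mem_filter] at hg
          apply mul_le_mul_of_nonneg_left _ (abs_nonneg _)
          calc ∏ k, |x (g k)| ≤ |x (g ⟨0, hk0⟩)| := prod_abs_le_single x hx1 g _
            _ ≤ u := hu _ (hg.2 _)
        · rw [Finset.sum_mul]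
          apply Finset.sum_le_sum
          intro g hg
          rw [mem_filter] at hg
          push_neg at hg
          obtain ⟨k0, hk⟩ := hg.2
          apply mul_le_mul_of_nonneg_left _ (abs_nonneg _)
          calc ∏ k, |x (g k)| ≤ |x (g k0)| := prod_abs_le_single x hx1 g k0
            _ = |x j| := by rw [hk]
            _ ≤ v := hvj


/-- Theorem 2.1: every Z-eigenvalue of `A` lies in `Ω(A)`. -/
theorem zeigenvalue_in_Omega (m n : ℕ) (hm : 2 ≤ m) (hn : 2 ≤ n)
    (a : Fin n → (Fin (m-1) → Fin n) → ℝ) (lam : ℝ) (x : Fin n → ℝ)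
    (hx : IsZEigenpair m n a lam x) :
    ∃ i j : Fin n, i ≠ j ∧
      ((|lam| < tP m n a i j ∧ |lam| < tP m n a j i) ∨
       (|lam| ≤ tR m n a i ∧
        (|lam| - tP m n a i j) * (|lam| - tP m n a j i) ≤
          (tR m n a i - tP m n a i j) * (tR m n a j - tP m n a j i))) := by
  obtain ⟨heig, hsum⟩ := hx
  haveI : NeZero n := ⟨by omega⟩
  have hx1 : ∀ i, |x i| ≤ 1 := by
    intro i
    have h2 : x i ^ 2 ≤ 1 := by
      rw [← hsum]
      exact Finset.single_le_sum (fun j _ => sq_nonneg (x j)) (mem_univ i)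
    nlinarith [abs_nonneg (x i), sq_abs (x i)]
  obtain ⟨t, -, ht⟩ := Finset.exists_max_image (univ : Finset (Fin n)) (fun i => |x i|)
    univ_nonempty
  have ht' : ∀ p : Fin n, |x p| ≤ |x t| := fun p => ht p (mem_univ p)
  have herase : ((univ : Finset (Fin n)).erase t).Nonempty := by
    rw [← Finset.card_pos, Finset.card_erase_of_mem (mem_univ t), Finset.card_univ,
      Fintype.card_fin]
    omega
  obtain ⟨s, hs_mem, hs⟩ := Finset.exists_max_image ((univ : Finset (Fin n)).erase t)
    (fun i => |x i|) herase
  have hst : s ≠ t := Finset.ne_of_mem_erase hs_mem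
  have hs' : ∀ p : Fin n, p ≠ t → |x p| ≤ |x s| := fun p hp =>
    hs p (Finset.mem_erase.mpr ⟨hp, mem_univ p⟩)
  have hxt_pos : 0 < |x t| := by
    rcases lt_or_ge 0 (|x t|) with h | h
    · exact h
    · exfalso
      have hz : ∀ p : Fin n, x p = 0 := by
        intro p
        have := ht' p
        have := abs_nonneg (x p)
        have : |x p| = 0 := le_antisymm (by linarith) (abs_nonneg _)
        exact abs_eq_zero.mp this
      have : (∑ i, x i ^ 2) = 0 := by
        apply Finset.sum_eq_zero; intro i _; rw [hz i]; ring
      linarith [hsum ▸ this]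
  have h1 : |lam| * |x t| ≤ tP m n a t s * |x t| + (tR m n a t - tP m n a t s) * |x s| := by
    have := tAx_bound m n hm a x hx1 t s (|x t|) (|x s|)
      (fun p _ => ht' p) le_rfl
    rwa [heig t, abs_mul] at this
  have h2 : |lam| * |x s| ≤ tP m n a s t * |x s| + (tR m n a s - tP m n a s t) * |x t| := by
    have := tAx_bound m n hm a x hx1 s t (|x s|) (|x t|)
      (fun p hp => hs' p hp) le_rfl
    rwa [heig s, abs_mul] at this
  have hxs_le : |x s| ≤ |x t| := ht' s
  have hxs_nonneg : 0 ≤ |x s| := abs_nonneg _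
  have hB1 : 0 ≤ tR m n a t - tP m n a t s := sub_nonneg.mpr (tP_le_tR m n a t s)
  have hB2 : 0 ≤ tR m n a s - tP m n a s t := sub_nonneg.mpr (tP_le_tR m n a s t)
  refine ⟨t, s, fun h => hst h.symm, ?_⟩
  by_cases hc : |lam| < tP m n a t s ∧ |lam| < tP m n a s t
  · exact Or.inl hc
  · refine Or.inr ⟨?_, ?_⟩
    · nlinarith [h1, hxs_le, hB1, hxt_pos]
    · rcases lt_or_ge (|lam| - tP m n a s t) 0 with hA2 | hA2
      · have hA1 : 0 ≤ |lam| - tP m n a t s := by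
          by_contra h
          exact hc ⟨by linarith, by linarith⟩
        nlinarith [mul_nonneg hB1 hB2]
      · nlinarith [mul_le_mul_of_nonneg_left h1 hA2, mul_le_mul_of_nonneg_left h2 hB1,
          hxt_pos]
end

section
/- Let A = (a_{i_1...i_m}) be a real tensor of order m and dimension n (m, n ≥ 2), and let r ≥ 0 be a real number. If there exist indices i ≠ j in N = {1,...,n} such that either (r < P_i^j(A) and r < P_j^i(A)), or (r ≤ R_i(A) and (r − P_i^j(A))·(r − P_j^i(A)) ≤ (R_i(A) − P_i^j(A))·(R_j(A) − P_j^i(A))), then there exist indices i ≠ j in N such that either (r − (R_i(A) − |a_{ij...j}|))·(r − P_j^i(A)) ≤ |a_{ij...j}|·(R_j(A) − P_j^i(A)), or (r < R_i(A) − |a_{ij...j}| and r < P_j^i(A)). In other words, Ω(A) ⊆ M(A). -/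
open Finset

lemma tP_add_abs_le_tR (m n : ℕ) (hm : 2 ≤ m) (a : Fin n → (Fin (m-1) → Fin n) → ℝ)
    (i j : Fin n) : tP m n a i j + |a i (fun _ => j)| ≤ tR m n a i := by
  have hc : (fun _ : Fin (m-1) => j) ∉
      Finset.univ.filter (fun g : Fin (m-1) → Fin n => ∀ k, g k ≠ j) := by
    simp only [mem_filter, mem_univ, true_and, not_forall]
    exact ⟨⟨0, by omega⟩, by simp⟩
  have h1 : tP m n a i j + |a i (fun _ => j)| =
      ∑ g ∈ insert (fun _ : Fin (m-1) => j)
        (Finset.univ.filter (fun g : Fin (m-1) → Fin n => ∀ k, g k ≠ j)), |a i g| := by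
    rw [Finset.sum_insert hc, tP, add_comm]
  rw [h1, tR]
  exact Finset.sum_le_sum_of_subset_of_nonneg (Finset.subset_univ _)
    (fun _ _ _ => abs_nonneg _)

/-- Theorem 2.2, first inclusion: `Ω(A) ⊆ M(A)`. -/
theorem Omega_subset_M (m n : ℕ) (hm : 2 ≤ m) (hn : 2 ≤ n)
    (a : Fin n → (Fin (m-1) → Fin n) → ℝ) (r : ℝ) (hr : 0 ≤ r)
    (h : ∃ i j : Fin n, i ≠ j ∧
      ((r < tP m n a i j ∧ r < tP m n a j i) ∨
       (r ≤ tR m n a i ∧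
        (r - tP m n a i j) * (r - tP m n a j i) ≤
          (tR m n a i - tP m n a i j) * (tR m n a j - tP m n a j i)))) :
    ∃ i j : Fin n, i ≠ j ∧
      ((r - (tR m n a i - |a i (fun _ => j)|)) * (r - tP m n a j i) ≤
          |a i (fun _ => j)| * (tR m n a j - tP m n a j i) ∨
       (r < tR m n a i - |a i (fun _ => j)| ∧ r < tP m n a j i)) := by
  obtain ⟨i, j, hij, hcase⟩ := h
  refine ⟨i, j, hij, ?_⟩
  have key1 := tP_add_abs_le_tR m n hm a i j
  have key2 := tP_le_tR m n a j i
  have hA : (0:ℝ) ≤ |a i (fun _ => j)| := abs_nonneg _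
  rcases hcase with ⟨h1, h2⟩ | ⟨hR, hprod⟩
  · exact Or.inr ⟨by linarith, h2⟩
  · by_cases hv : tP m n a j i ≤ r
    · left
      by_cases hRj : tR m n a j ≤ r
      · nlinarith [mul_nonneg (by linarith : (0:ℝ) ≤ tR m n a i - tP m n a i j - |a i (fun _ => j)|)
          (by linarith : (0:ℝ) ≤ r - tR m n a j)]
      · by_cases hs : r ≤ tR m n a i - |a i (fun _ => j)|
        · nlinarith [mul_nonneg hA (by linarith : (0:ℝ) ≤ tR m n a j - tP m n a j i),
            mul_nonneg (by linarith : (0:ℝ) ≤ tR m n a i - |a i (fun _ => j)| - r)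
              (by linarith : (0:ℝ) ≤ r - tP m n a j i)]
        · nlinarith [mul_nonneg hA (by linarith : (0:ℝ) ≤ tR m n a j - r),
            mul_nonneg (by linarith : (0:ℝ) ≤ |a i (fun _ => j)| - (r - (tR m n a i - |a i (fun _ => j)|)))
              (by linarith : (0:ℝ) ≤ r - tP m n a j i)]
    · by_cases hs : r < tR m n a i - |a i (fun _ => j)|
      · exact Or.inr ⟨hs, lt_of_not_ge hv⟩
      · left
        nlinarith [mul_nonneg hA (by linarith : (0:ℝ) ≤ tR m n a j - tP m n a j i),
          mul_nonneg (by linarith : (0:ℝ) ≤ r - (tR m n a i - |a i (fun _ => j)|))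
            (by linarith : (0:ℝ) ≤ tP m n a j i - r)]
end

section
/- Let A = (a_{i_1...i_m}) be a real tensor of order m and dimension n (m, n ≥ 2), and let r ≥ 0 be a real number. If there exist indices i ≠ j in N = {1,...,n} such that either (r − (R_i(A) − |a_{ij...j}|))·(r − P_j^i(A)) ≤ |a_{ij...j}|·(R_j(A) − P_j^i(A)), or (r < R_i(A) − |a_{ij...j}| and r < P_j^i(A)), then there exists an index i ∈ N with r ≤ R_i(A). In other words, M(A) ⊆ K(A). -/
open Finset

/-- Theorem 2.2, second inclusion: `M(A) ⊆ K(A)`. -/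
theorem M_subset_K (m n : ℕ) (hm : 2 ≤ m) (hn : 2 ≤ n)
    (a : Fin n → (Fin (m-1) → Fin n) → ℝ) (r : ℝ) (hr : 0 ≤ r)
    (h : ∃ i j : Fin n, i ≠ j ∧
      ((r - (tR m n a i - |a i (fun _ => j)|)) * (r - tP m n a j i) ≤
          |a i (fun _ => j)| * (tR m n a j - tP m n a j i) ∨
       (r < tR m n a i - |a i (fun _ => j)| ∧ r < tP m n a j i))) :
    ∃ i : Fin n, r ≤ tR m n a i := by
  by_contra hc
  push_neg at hc
  obtain ⟨i, j, _, hcase⟩ := h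
  have hPR : tP m n a j i ≤ tR m n a j :=
    Finset.sum_le_sum_of_subset_of_nonneg (Finset.filter_subset _ _)
      (fun _ _ _ => abs_nonneg _)
  have hi := hc i
  have hj := hc j
  have hcnn : (0:ℝ) ≤ |a i (fun _ => j)| := abs_nonneg _
  rcases hcase with h1 | ⟨h2, h3⟩
  · nlinarith [mul_pos (sub_pos.mpr hi) (sub_pos.mpr (lt_of_le_of_lt hPR hj))]
  · nlinarith
end

section
/- Let A = (a_{i_1...i_m}) be a weakly symmetric nonnegative real tensor of order m and dimension n (m, n ≥ 2). Then the Z-spectral radius satisfies ρ(A) ≤ Ω_max := max{Ω̂_max, Ω̃_max}, where Ω̂_max = max_{i,j ∈ N, j ≠ i} min{P_i^j(A), P_j^i(A)}, Ω̃_max = max_{i,j ∈ N, j ≠ i} min{R_i(A), Δ_{i,j}(A)}, and Δ_{i,j}(A) = ½·(P_i^j(A) + P_j^i(A) + √((P_i^j(A) − P_j^i(A))² + 4·(R_i(A) − P_i^j(A))·(R_j(A) − P_j^i(A)))). -/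
open Finset

/-- The homogeneous polynomial `A x^m = Σ_{i_1,...,i_m} a_{i_1...i_m} x_{i_1} ⋯ x_{i_m}`. -/
noncomputable def tAxm (m n : ℕ) (a : Fin n → (Fin (m-1) → Fin n) → ℝ)
    (x : Fin n → ℝ) : ℝ :=
  ∑ i, x i * tAx m n a x i

/-- `A` is weakly symmetric: `∇(A x^m) = m · A x^{m-1}` for all `x`. -/
def WeaklySymmetric (m n : ℕ) (a : Fin n → (Fin (m-1) → Fin n) → ℝ) : Prop :=
  ∀ x y : Fin n → ℝ,
    fderiv ℝ (tAxm m n a) x y = (m : ℝ) * ∑ i, tAx m n a x i * y i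

theorem pairsNonempty {n : ℕ} (hn : 2 ≤ n) :
    (Finset.univ.filter fun p : Fin n × Fin n => p.1 ≠ p.2).Nonempty := by
  refine ⟨(⟨0, by omega⟩, ⟨1, by omega⟩), ?_⟩
  simp [Finset.mem_filter, Fin.ext_iff]

/-- `Δ_{i,j}(A)`. -/
noncomputable def tDelta (m n : ℕ) (a : Fin n → (Fin (m-1) → Fin n) → ℝ)
    (i j : Fin n) : ℝ :=
  (1/2) * (tP m n a i j + tP m n a j i +
    Real.sqrt ((tP m n a i j - tP m n a j i)^2 +
      4 * (tR m n a i - tP m n a i j) * (tR m n a j - tP m n a j i)))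

/-- `Ω̂_max = max_{i ≠ j} min{P_i^j(A), P_j^i(A)}`. -/
noncomputable def OmegaHatMax (m n : ℕ) (hn : 2 ≤ n)
    (a : Fin n → (Fin (m-1) → Fin n) → ℝ) : ℝ :=
  (Finset.univ.filter fun p : Fin n × Fin n => p.1 ≠ p.2).sup' (pairsNonempty hn)
    (fun p => min (tP m n a p.1 p.2) (tP m n a p.2 p.1))

/-- `Ω̃_max = max_{i ≠ j} min{R_i(A), Δ_{i,j}(A)}`. -/
noncomputable def OmegaTildeMax (m n : ℕ) (hn : 2 ≤ n)
    (a : Fin n → (Fin (m-1) → Fin n) → ℝ) : ℝ :=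
  (Finset.univ.filter fun p : Fin n × Fin n => p.1 ≠ p.2).sup' (pairsNonempty hn)
    (fun p => min (tR m n a p.1) (tDelta m n a p.1 p.2))

section Aux

lemma prod_le_const' {M : ℕ} (hM : M ≠ 0) (f : Fin M → ℝ) (c : ℝ)
    (h0 : ∀ k, 0 ≤ f k) (hc : ∀ k, f k ≤ c) (hc1 : c ≤ 1) :
    ∏ k, f k ≤ c := by
  have hc0 : 0 ≤ c := le_trans (h0 ⟨0, Nat.pos_of_ne_zero hM⟩) (hc _)
  calc ∏ k, f k ≤ ∏ _k : Fin M, c :=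
        Finset.prod_le_prod (fun k _ => h0 k) (fun k _ => hc k)
    _ = c ^ M := by simp
    _ ≤ c := pow_le_of_le_one hc0 hc1 hM

lemma prod_le_single'' {M : ℕ} (f : Fin M → ℝ) (c : ℝ)
    (h0 : ∀ k, 0 ≤ f k) (h1 : ∀ k, f k ≤ 1) (k0 : Fin M) (hk0 : f k0 ≤ c) :
    ∏ k, f k ≤ c := by
  calc ∏ k, f k = f k0 * ∏ k ∈ Finset.univ.erase k0, f k :=
        (Finset.mul_prod_erase Finset.univ f (Finset.mem_univ k0)).symm
    _ ≤ f k0 * 1 := by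
        apply mul_le_mul_of_nonneg_left _ (h0 k0)
        exact Finset.prod_le_one (fun k _ => h0 k) (fun k _ => h1 k)
    _ ≤ c := by simpa using hk0

lemma tAx_abs_bound (m n : ℕ) (a : Fin n → (Fin (m-1) → Fin n) → ℝ)
    (x : Fin n → ℝ) (i w : Fin n) (c d : ℝ)
    (hc : ∀ g : Fin (m-1) → Fin n, (∀ k, g k ≠ w) → ∏ k, |x (g k)| ≤ c)
    (hd : ∀ g : Fin (m-1) → Fin n, ¬(∀ k, g k ≠ w) → ∏ k, |x (g k)| ≤ d) :
    |tAx m n a x i| ≤ tP m n a i w * c + (tR m n a i - tP m n a i w) * d := by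
  have key : |tAx m n a x i| ≤ ∑ g : Fin (m-1) → Fin n, |a i g| * ∏ k, |x (g k)| := by
    refine (Finset.abs_sum_le_sum_abs _ _).trans ?_
    refine Finset.sum_le_sum fun g _ => ?_
    rw [abs_mul, Finset.abs_prod]
  refine key.trans ?_
  set Q := fun g : Fin (m-1) → Fin n => ∀ k, g k ≠ w with hQ
  have e2 : tR m n a i
      = tP m n a i w + ∑ g ∈ Finset.univ.filter (fun g => ¬ Q g), |a i g| :=
    (Finset.sum_filter_add_sum_filter_not Finset.univ Q (fun g => |a i g|)).symm
  have split : ∑ g : Fin (m-1) → Fin n, |a i g| * ∏ k, |x (g k)|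
      = ∑ g ∈ Finset.univ.filter Q, |a i g| * ∏ k, |x (g k)|
        + ∑ g ∈ Finset.univ.filter (fun g => ¬ Q g), |a i g| * ∏ k, |x (g k)| :=
    (Finset.sum_filter_add_sum_filter_not Finset.univ Q _).symm
  have b1 : ∑ g ∈ Finset.univ.filter Q, |a i g| * ∏ k, |x (g k)|
      ≤ tP m n a i w * c := by
    rw [tP, Finset.sum_mul]
    exact Finset.sum_le_sum fun g hg =>
      mul_le_mul_of_nonneg_left (hc g (Finset.mem_filter.mp hg).2) (abs_nonneg _)
  have b2 : ∑ g ∈ Finset.univ.filter (fun g => ¬ Q g), |a i g| * ∏ k, |x (g k)|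
      ≤ (∑ g ∈ Finset.univ.filter (fun g => ¬ Q g), |a i g|) * d := by
    rw [Finset.sum_mul]
    exact Finset.sum_le_sum fun g hg =>
      mul_le_mul_of_nonneg_left (hd g (Finset.mem_filter.mp hg).2) (abs_nonneg _)
  rw [split, e2]
  have : tP m n a i w + (∑ g ∈ Finset.univ.filter (fun g => ¬ Q g), |a i g|) - tP m n a i w
      = ∑ g ∈ Finset.univ.filter (fun g => ¬ Q g), |a i g| := by ring
  rw [this]
  exact add_le_add b1 b2

end Aux

set_option maxHeartbeats 1000000 in
/-- Theorem 3.1: for a weakly symmetric nonnegative tensor,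
`ρ(A) ≤ Ω_max = max{Ω̂_max, Ω̃_max}`. -/
theorem zspectral_radius_le_OmegaMax (m n : ℕ) (hm : 2 ≤ m) (hn : 2 ≤ n)
    (a : Fin n → (Fin (m-1) → Fin n) → ℝ)
    (hnn : ∀ i g, 0 ≤ a i g) (hws : WeaklySymmetric m n a)
    (lam : ℝ) (x : Fin n → ℝ) (hx : IsZEigenpair m n a lam x) :
    |lam| ≤ max (OmegaHatMax m n hn a) (OmegaTildeMax m n hn a) := by
  obtain ⟨heig, hnorm⟩ := hx
  obtain ⟨i, -, hi⟩ := Finset.exists_max_image Finset.univ (fun k => |x k|)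
    ⟨⟨0, by omega⟩, Finset.mem_univ _⟩
  simp only [Finset.mem_univ, forall_const] at hi
  have herase : (Finset.univ.erase i).Nonempty := by
    rw [← Finset.card_pos, Finset.card_erase_of_mem (Finset.mem_univ i)]
    simp; omega
  obtain ⟨j, hjmem, hj⟩ := Finset.exists_max_image (Finset.univ.erase i) (fun k => |x k|) herase
  have hji : j ≠ i := (Finset.mem_erase.mp hjmem).1
  set s := |x i| with hs_def
  set t := |x j| with ht_def
  have hM : m - 1 ≠ 0 := by omega
  have hts : t ≤ s := hi j
  have ht0 : (0:ℝ) ≤ t := abs_nonneg _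
  -- all |x k| ≤ 1
  have hle1 : ∀ k, |x k| ≤ 1 := by
    intro k
    have h2 : x k ^ 2 ≤ 1 := by
      rw [← hnorm]
      exact Finset.single_le_sum (fun l _ => sq_nonneg (x l)) (Finset.mem_univ k)
    nlinarith [abs_nonneg (x k), sq_abs (x k)]
  have hs1 : s ≤ 1 := hle1 i
  have ht1 : t ≤ 1 := hts.trans hs1
  have hs_pos : 0 < s := by
    rcases (abs_nonneg (x i)).lt_or_eq with h | h
    · exact h
    · exfalso
      have hs0 : s = 0 := hs_def.trans h.symm
      have hz : ∀ k, x k = 0 := fun k =>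
        abs_eq_zero.mp (le_antisymm ((hi k).trans hs0.le) (abs_nonneg _))
      simp [hz] at hnorm
  have hjk : ∀ k, k ≠ i → |x k| ≤ t := fun k hk =>
    hj k (Finset.mem_erase.mpr ⟨hk, Finset.mem_univ k⟩)
  set P1 := tP m n a i j with hP1def
  set P2 := tP m n a j i with hP2def
  set R1 := tR m n a i with hR1def
  set R2 := tR m n a j with hR2def
  have hPR : ∀ p q : Fin n, tP m n a p q ≤ tR m n a p := fun p q =>
    Finset.sum_le_sum_of_subset_of_nonneg (Finset.filter_subset _ _)
      (fun _ _ _ => abs_nonneg _)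
  have hP0 : ∀ p q : Fin n, 0 ≤ tP m n a p q := fun p q =>
    Finset.sum_nonneg fun _ _ => abs_nonneg _
  have hP1R : P1 ≤ R1 := hPR i j
  have hP2R : P2 ≤ R2 := hPR j i
  set u := |lam| with hu_def
  -- inequality (1)
  have ineq1 : u * s ≤ P1 * s + (R1 - P1) * t := by
    have h1 : u * s = |tAx m n a x i| := by rw [heig i, abs_mul]
    rw [h1]
    refine tAx_abs_bound m n a x i j s t (fun g _ => ?_) (fun g hg => ?_)
    · exact prod_le_const' hM _ s (fun k => abs_nonneg _) (fun k => hi (g k)) hs1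
    · push_neg at hg
      obtain ⟨k0, hk0⟩ := hg
      exact prod_le_single'' _ t (fun k => abs_nonneg _) (fun k => hle1 _) k0 (by rw [hk0])
  -- inequality (2)
  have ineq2 : u * t ≤ P2 * t + (R2 - P2) * s := by
    have h1 : u * t = |tAx m n a x j| := by rw [heig j, abs_mul]
    rw [h1]
    refine tAx_abs_bound m n a x j i t s (fun g hg => ?_) (fun g hg => ?_)
    · exact prod_le_const' hM _ t (fun k => abs_nonneg _) (fun k => hjk (g k) (hg k)) ht1
    · push_neg at hg
      obtain ⟨k0, hk0⟩ := hg
      exact prod_le_single'' _ s (fun k => abs_nonneg _) (fun k => hle1 _) k0 (by rw [hk0])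
  -- u ≤ Δ : setup
  set E := (P1 - P2)^2 + 4 * (R1 - P1) * (R2 - P2) with hEdef
  have hE0 : 0 ≤ E := by
    rw [hEdef]
    have : 0 ≤ 4 * (R1 - P1) * (R2 - P2) := by
      have h1 : 0 ≤ R1 - P1 := sub_nonneg.mpr hP1R
      have h2 : 0 ≤ R2 - P2 := sub_nonneg.mpr hP2R
      positivity
    positivity
  set D := Real.sqrt E with hDdef
  have hD0 : (0:ℝ) ≤ D := Real.sqrt_nonneg _
  have hD2 : D ^ 2 = E := Real.sq_sqrt hE0
  have hDabs : |P1 - P2| ≤ D := by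
    rw [hDdef, ← Real.sqrt_sq_eq_abs]
    refine Real.sqrt_le_sqrt ?_
    rw [hEdef]
    nlinarith [sub_nonneg.mpr hP1R, sub_nonneg.mpr hP2R]
  have hDelta : tDelta m n a i j = (1/2) * (P1 + P2 + D) := rfl
  have hEeq : E = (P1 - P2)^2 + 4 * (R1 - P1) * (R2 - P2) := hEdef
  clear_value D E u R1 R2 P1 P2 t s
  clear hEdef hDdef
  -- u ≤ R1
  have huR1 : u ≤ R1 := by
    nlinarith [mul_le_mul_of_nonneg_left hts (sub_nonneg.mpr hP1R)]
  have huD : u ≤ tDelta m n a i j := by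
    rw [hDelta]
    by_cases h1 : u ≤ P1
    · nlinarith [le_abs_self (P1 - P2)]
    by_cases h2 : u ≤ P2
    · nlinarith [neg_abs_le (P1 - P2)]
    push_neg at h1 h2
    have ht_pos : 0 < t := by
      rcases ht0.lt_or_eq with h | h
      · exact h
      · exfalso; nlinarith
    have A1 : (u - P1) * s ≤ (R1 - P1) * t := by nlinarith
    have A2 : (u - P2) * t ≤ (R2 - P2) * s := by nlinarith
    have M1 : ((u - P1) * s) * ((u - P2) * t) ≤ ((R1 - P1) * t) * ((R2 - P2) * s) :=
      mul_le_mul A1 A2 (mul_nonneg (by linarith) ht0) (mul_nonneg (by linarith) ht0)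
    have key : (u - P1) * (u - P2) ≤ (R1 - P1) * (R2 - P2) := by
      nlinarith [mul_pos hs_pos ht_pos]
    by_contra hcon
    push_neg at hcon
    have hw : 0 < 2*u - P1 - P2 - D := by nlinarith
    rw [hEeq] at hD2
    nlinarith [mul_pos hw (by nlinarith : (0:ℝ) < 2*u - P1 - P2 + D)]
  -- conclude
  have hmem : (i, j) ∈ Finset.univ.filter (fun p : Fin n × Fin n => p.1 ≠ p.2) := by
    simp [hji.symm]
  have hsup : min (tR m n a i) (tDelta m n a i j) ≤ OmegaTildeMax m n hn a :=
    Finset.le_sup' (fun p : Fin n × Fin n => min (tR m n a p.1) (tDelta m n a p.1 p.2)) hmem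
  exact le_trans (le_min (hR1def ▸ huR1) huD) (hsup.trans (le_max_right _ _))
end

section
/- Let A = (a_{i_1...i_m}) be a weakly symmetric nonnegative real tensor of order m and dimension n (m, n ≥ 2). Then Ω_max ≤ max_{i,j ∈ N, i ≠ j} max{½·(R_i(A) − a_{ij...j} + P_j^i(A) + Λ_{i,j}(A)^{1/2}), R_i(A) − a_{ij...j}, P_j^i(A)} ≤ max_{i ∈ N} R_i(A), where Λ_{i,j}(A) = (R_i(A) − a_{ij...j} − P_j^i(A))² + 4·a_{ij...j}·(R_j(A) − P_j^i(A)); in particular ρ(A) ≤ Ω_max is sharper than these bounds. -/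
open Finset

/-- `Λ_{i,j}(A)`. -/
noncomputable def tLambda (m n : ℕ) (a : Fin n → (Fin (m-1) → Fin n) → ℝ)
    (i j : Fin n) : ℝ :=
  (tR m n a i - a i (fun _ => j) - tP m n a j i)^2 +
    4 * a i (fun _ => j) * (tR m n a j - tP m n a j i)

/-- The bound of Wang et al.:
`max_{i ≠ j} max{½(R_i(A) − a_{ij⋯j} + P_j^i(A) + Λ_{i,j}(A)^{1/2}), R_i(A) − a_{ij⋯j}, P_j^i(A)}`. -/
noncomputable def WangBound (m n : ℕ) (hn : 2 ≤ n)
    (a : Fin n → (Fin (m-1) → Fin n) → ℝ) : ℝ :=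
  (Finset.univ.filter fun p : Fin n × Fin n => p.1 ≠ p.2).sup' (pairsNonempty hn)
    (fun p => max (max
      ((1/2) * (tR m n a p.1 - a p.1 (fun _ => p.2) + tP m n a p.2 p.1 +
        Real.sqrt (tLambda m n a p.1 p.2)))
      (tR m n a p.1 - a p.1 (fun _ => p.2)))
      (tP m n a p.2 p.1))

section Aux

lemma sqrt_half_le (p q c B : ℝ) (hc : 0 ≤ c) (hp : p ≤ B) (hq : q ≤ B)
    (h : c ≤ (B - p) * (B - q)) :
    1/2 * (p + q + Real.sqrt ((p - q)^2 + 4*c)) ≤ B := by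
  have h1 : Real.sqrt ((p - q)^2 + 4*c) ≤ 2*B - p - q := by
    rw [show (2*B - p - q) = Real.sqrt ((2*B - p - q)^2) from
      (Real.sqrt_sq (by linarith)).symm]
    exact Real.sqrt_le_sqrt (by nlinarith)
  linarith

lemma le_sqrt_half (p q c u : ℝ) (h : (u - p) * (u - q) ≤ c) (hp : p ≤ u) (hq : q ≤ u) :
    u ≤ 1/2 * (p + q + Real.sqrt ((p - q)^2 + 4*c)) := by
  have h1 : 2*u - p - q ≤ Real.sqrt ((p - q)^2 + 4*c) := by
    rw [show (2*u - p - q) = Real.sqrt ((2*u - p - q)^2) from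
      (Real.sqrt_sq (by linarith)).symm]
    exact Real.sqrt_le_sqrt (by nlinarith)
  linarith

lemma half_ge (p q c : ℝ) (hc : 0 ≤ c) :
    p ≤ 1/2 * (p + q + Real.sqrt ((p - q)^2 + 4*c)) ∧
    q ≤ 1/2 * (p + q + Real.sqrt ((p - q)^2 + 4*c)) := by
  have h1 : |p - q| ≤ Real.sqrt ((p - q)^2 + 4*c) := by
    rw [← Real.sqrt_sq_eq_abs]
    exact Real.sqrt_le_sqrt (by linarith)
  have h2 := le_abs_self (p - q)
  have h3 := neg_abs_le (p - q)
  constructor <;> linarith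

lemma half_eq (p q c : ℝ) (hc : 0 ≤ c) :
    (1/2 * (p + q + Real.sqrt ((p - q)^2 + 4*c)) - p) *
      (1/2 * (p + q + Real.sqrt ((p - q)^2 + 4*c)) - q) = c := by
  have hs : Real.sqrt ((p - q)^2 + 4*c) ^ 2 = (p - q)^2 + 4*c :=
    Real.sq_sqrt (by positivity)
  linear_combination (1/4) * hs

lemma tP_add_entry_le (m n : ℕ) (hm1 : 0 < m - 1)
    (a : Fin n → (Fin (m-1) → Fin n) → ℝ) (i j : Fin n) :
    tP m n a i j + |a i (fun _ => j)| ≤ tR m n a i := by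
  have h := Finset.sum_filter_add_sum_filter_not Finset.univ
    (fun g : Fin (m-1) → Fin n => ∀ k, g k ≠ j) (fun g => |a i g|)
  have h2 : |a i (fun _ => j)| ≤
      ∑ g ∈ Finset.univ.filter (fun g : Fin (m-1) → Fin n => ¬ ∀ k, g k ≠ j), |a i g| := by
    refine Finset.single_le_sum (f := fun g : Fin (m-1) → Fin n => |a i g|)
      (fun g _ => abs_nonneg _) ?_
    simp only [Finset.mem_filter]
    refine ⟨Finset.mem_univ _, ?_⟩
    push_neg
    exact ⟨⟨0, hm1⟩, rfl⟩
  unfold tP tR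
  linarith

lemma prod_abs_le {m n : ℕ} (x : Fin n → ℝ) (g : Fin (m-1) → Fin n)
    (h1 : ∀ k : Fin n, |x k| ≤ 1) (k0 : Fin (m-1)) (B : ℝ) (hB : |x (g k0)| ≤ B) :
    |∏ k, x (g k)| ≤ B := by
  rw [Finset.abs_prod]
  rw [← Finset.mul_prod_erase Finset.univ (fun k => |x (g k)|) (Finset.mem_univ k0)]
  have h3 : ∏ k ∈ Finset.univ.erase k0, |x (g k)| ≤ 1 :=
    Finset.prod_le_one (fun k _ => abs_nonneg _) (fun k _ => h1 (g k))
  have h4 : (0:ℝ) ≤ ∏ k ∈ Finset.univ.erase k0, |x (g k)| :=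
    Finset.prod_nonneg (fun k _ => abs_nonneg _)
  nlinarith [abs_nonneg (x (g k0))]

lemma row_bound (m n : ℕ) (a : Fin n → (Fin (m-1) → Fin n) → ℝ)
    (x : Fin n → ℝ) (lam : ℝ) (i j : Fin n) (B C : ℝ)
    (heig : tAx m n a x i = lam * x i)
    (hB : ∀ g : Fin (m-1) → Fin n, (∀ k, g k ≠ j) → |∏ k, x (g k)| ≤ B)
    (hC : ∀ g : Fin (m-1) → Fin n, ¬(∀ k, g k ≠ j) → |∏ k, x (g k)| ≤ C) :
    |lam * x i| ≤ tP m n a i j * B + (tR m n a i - tP m n a i j) * C := by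
  rw [← heig]
  have h1 : |tAx m n a x i| ≤ ∑ g : Fin (m-1) → Fin n, |a i g| * |∏ k, x (g k)| := by
    refine (Finset.abs_sum_le_sum_abs _ _).trans (le_of_eq ?_)
    exact Finset.sum_congr rfl (fun g _ => abs_mul _ _)
  refine h1.trans ?_
  rw [← Finset.sum_filter_add_sum_filter_not Finset.univ
    (fun g : Fin (m-1) → Fin n => ∀ k, g k ≠ j)
    (fun g => |a i g| * |∏ k, x (g k)|)]
  have e1 : tR m n a i - tP m n a i j =
      ∑ g ∈ Finset.univ.filter (fun g : Fin (m-1) → Fin n => ¬ ∀ k, g k ≠ j), |a i g| := by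
    have h := Finset.sum_filter_add_sum_filter_not Finset.univ
      (fun g : Fin (m-1) → Fin n => ∀ k, g k ≠ j) (fun g => |a i g|)
    unfold tP tR
    linarith
  rw [e1]
  unfold tP
  rw [Finset.sum_mul, Finset.sum_mul]
  refine add_le_add (Finset.sum_le_sum ?_) (Finset.sum_le_sum ?_)
  · intro g hg
    exact mul_le_mul_of_nonneg_left (hB g (Finset.mem_filter.mp hg).2) (abs_nonneg _)
  · intro g hg
    exact mul_le_mul_of_nonneg_left (hC g (Finset.mem_filter.mp hg).2) (abs_nonneg _)

lemma part1_core (u P1 P2 R1 R2 α β : ℝ) (hα : 0 < α) (hβ0 : 0 ≤ β)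
    (hP1R : P1 ≤ R1) (hP2R : P2 ≤ R2) (hβα : β ≤ α)
    (hI : u * α ≤ P1 * α + (R1 - P1) * β) (hII : u * β ≤ P2 * β + (R2 - P2) * α) :
    u ≤ R1 ∧ u ≤ 1/2 * (P1 + P2 +
      Real.sqrt ((P1 - P2)^2 + 4*((R1 - P1) * (R2 - P2)))) := by
  have hc0 : 0 ≤ (R1 - P1) * (R2 - P2) := mul_nonneg (by linarith) (by linarith)
  have hR : u ≤ R1 := by
    have h : u * α ≤ R1 * α := by nlinarith
    exact le_of_mul_le_mul_right h hα
  refine ⟨hR, ?_⟩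
  rcases le_or_gt u P1 with h | h
  · exact h.trans (half_ge P1 P2 _ hc0).1
  rcases le_or_gt u P2 with h2 | h2
  · exact h2.trans (half_ge P1 P2 _ hc0).2
  have hβ : 0 < β := by
    rcases lt_or_eq_of_le hβ0 with hb | hb
    · exact hb
    · exfalso
      have : u * α ≤ P1 * α := by rw [← hb] at hI; linarith
      nlinarith
  have h1 : (u - P1) * α ≤ (R1 - P1) * β := by linarith
  have h2' : (u - P2) * β ≤ (R2 - P2) * α := by linarith
  have h3 := mul_le_mul h1 h2' (mul_nonneg (by linarith) hβ0)
    (mul_nonneg (by linarith) hβ0)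
  have h4 : (u - P1) * (u - P2) * (α * β) ≤ (R1 - P1) * (R2 - P2) * (α * β) := by
    nlinarith [h3]
  have hkey : (u - P1) * (u - P2) ≤ (R1 - P1) * (R2 - P2) :=
    le_of_mul_le_mul_right h4 (mul_pos hα hβ)
  exact le_sqrt_half P1 P2 _ u hkey h.le h2.le

lemma tDelta_symm (m n : ℕ) (a : Fin n → (Fin (m-1) → Fin n) → ℝ) (i j : Fin n) :
    tDelta m n a i j = tDelta m n a j i := by
  unfold tDelta
  rw [show (tP m n a i j - tP m n a j i)^2 +
      4 * (tR m n a i - tP m n a i j) * (tR m n a j - tP m n a j i)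
      = (tP m n a j i - tP m n a i j)^2 +
      4 * (tR m n a j - tP m n a j i) * (tR m n a i - tP m n a i j) from by ring]
  ring

lemma tDelta_expand (m n : ℕ) (a : Fin n → (Fin (m-1) → Fin n) → ℝ) (i j : Fin n) :
    tDelta m n a i j = 1/2 * (tP m n a i j + tP m n a j i +
      Real.sqrt ((tP m n a i j - tP m n a j i)^2 +
        4*((tR m n a i - tP m n a i j) * (tR m n a j - tP m n a j i)))) := by
  unfold tDelta
  rw [show 4 * (tR m n a i - tP m n a i j) * (tR m n a j - tP m n a j i)
    = 4*((tR m n a i - tP m n a i j) * (tR m n a j - tP m n a j i)) from by ring]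

lemma tLambda_expand (m n : ℕ) (a : Fin n → (Fin (m-1) → Fin n) → ℝ) (i j : Fin n) :
    tLambda m n a i j = ((tR m n a i - a i (fun _ => j)) - tP m n a j i)^2 +
      4*((a i (fun _ => j)) * (tR m n a j - tP m n a j i)) := by
  unfold tLambda
  ring

/-- If `Δ_{i,j} ≥ R_j` then `Δ_{i,j}` is at most the Wang-term at `(i,j)`. -/
lemma wang_case (m n : ℕ) (hm1 : 0 < m - 1)
    (a : Fin n → (Fin (m-1) → Fin n) → ℝ) (hnn : ∀ i g, 0 ≤ a i g) (i j : Fin n)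
    (hge : tR m n a j ≤ tDelta m n a i j) :
    tDelta m n a i j ≤ max (max
      ((1/2) * (tR m n a i - a i (fun _ => j) + tP m n a j i +
        Real.sqrt (tLambda m n a i j)))
      (tR m n a i - a i (fun _ => j)))
      (tP m n a j i) := by
  have hb : 0 ≤ a i (fun _ => j) := hnn _ _
  have hbR : tP m n a i j + a i (fun _ => j) ≤ tR m n a i := by
    have h := tP_add_entry_le m n hm1 a i j
    rwa [abs_of_nonneg hb] at h
  have hP2R := tP_le_tR m n a j i
  have hc0 : 0 ≤ (tR m n a i - tP m n a i j) * (tR m n a j - tP m n a j i) :=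
    mul_nonneg (by linarith [tP_le_tR m n a i j]) (by linarith)
  have hge2 := half_ge (tP m n a i j) (tP m n a j i) _ hc0
  have heq := half_eq (tP m n a i j) (tP m n a j i) _ hc0
  rw [← tDelta_expand m n a i j] at hge2 heq
  rcases le_or_gt (tDelta m n a i j) (tR m n a i - a i (fun _ => j)) with h | h
  · exact le_max_of_le_left (le_max_of_le_right h)
  rcases le_or_gt (tDelta m n a i j) (tP m n a j i) with h2 | h2
  · exact le_max_of_le_right h2
  refine le_max_of_le_left (le_max_of_le_left ?_)
  rw [tLambda_expand]
  refine le_sqrt_half _ _ _ _ ?_ h.le h2.le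
  nlinarith [heq, mul_nonneg
    (show (0:ℝ) ≤ tR m n a i - tP m n a i j - a i (fun _ => j) by linarith)
    (show (0:ℝ) ≤ tDelta m n a i j - tR m n a j by linarith)]

end Aux

/-- Theorem 3.2: for a weakly symmetric nonnegative tensor,
`ρ(A) ≤ Ω_max ≤` the bound of Wang et al. `≤ max_i R_i(A)`. -/
theorem OmegaMax_sharper (m n : ℕ) (hm : 2 ≤ m) (hn : 2 ≤ n)
    (a : Fin n → (Fin (m-1) → Fin n) → ℝ)
    (hnn : ∀ i g, 0 ≤ a i g) (hws : WeaklySymmetric m n a) :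
    (∀ lam x, IsZEigenpair m n a lam x →
      |lam| ≤ max (OmegaHatMax m n hn a) (OmegaTildeMax m n hn a)) ∧
    max (OmegaHatMax m n hn a) (OmegaTildeMax m n hn a) ≤ WangBound m n hn a ∧
    WangBound m n hn a ≤
      Finset.univ.sup' ⟨⟨0, by omega⟩, Finset.mem_univ _⟩ (tR m n a) := by
  have hm1 : 0 < m - 1 := by omega
  refine ⟨?_, ?_, ?_⟩
  · -- Part 1: |lam| ≤ Ω_max
    intro lam x hex
    obtain ⟨heig, hnorm⟩ := hex
    obtain ⟨t, -, ht⟩ := Finset.exists_max_image Finset.univ (fun i => |x i|)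
      ⟨⟨0, by omega⟩, Finset.mem_univ _⟩
    replace ht : ∀ i, |x i| ≤ |x t| := fun i => ht i (Finset.mem_univ i)
    have htpos : 0 < |x t| := by
      by_contra hcon
      push_neg at hcon
      have hz : ∀ i, x i = 0 := fun i =>
        abs_eq_zero.mp (le_antisymm ((ht i).trans hcon) (abs_nonneg _))
      simp [hz] at hnorm
    have hxt1 : |x t| ≤ 1 := by
      have h2 : x t ^ 2 ≤ 1 := by
        calc x t ^ 2 ≤ ∑ i, x i ^ 2 :=
              Finset.single_le_sum (f := fun i => x i ^ 2) (fun i _ => sq_nonneg _) (Finset.mem_univ t)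
          _ = 1 := hnorm
      nlinarith [abs_nonneg (x t), sq_abs (x t)]
    have hle1 : ∀ i, |x i| ≤ 1 := fun i => (ht i).trans hxt1
    have hne2 : (Finset.univ.erase t).Nonempty := by
      rw [← Finset.card_pos, Finset.card_erase_of_mem (Finset.mem_univ t),
        Finset.card_univ, Fintype.card_fin]
      omega
    obtain ⟨s, hsmem, hs⟩ := Finset.exists_max_image _ (fun i => |x i|) hne2
    have hst : s ≠ t := (Finset.mem_erase.mp hsmem).1
    have hsle : ∀ i, i ≠ t → |x i| ≤ |x s| := fun i hi =>
      hs i (Finset.mem_erase.mpr ⟨hi, Finset.mem_univ _⟩)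
    have hI : |lam| * |x t| ≤
        tP m n a t s * |x t| + (tR m n a t - tP m n a t s) * |x s| := by
      rw [← abs_mul]
      refine row_bound m n a x lam t s _ _ (heig t) ?_ ?_
      · intro g hg
        exact prod_abs_le x g hle1 ⟨0, hm1⟩ _ (ht _)
      · intro g hg
        push_neg at hg
        obtain ⟨k0, hk0⟩ := hg
        exact prod_abs_le x g hle1 k0 _ (le_of_eq (by rw [hk0]))
    have hII : |lam| * |x s| ≤
        tP m n a s t * |x s| + (tR m n a s - tP m n a s t) * |x t| := by
      rw [← abs_mul]
      refine row_bound m n a x lam s t _ _ (heig s) ?_ ?_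
      · intro g hg
        exact prod_abs_le x g hle1 ⟨0, hm1⟩ _ (hsle _ (hg ⟨0, hm1⟩))
      · intro g hg
        push_neg at hg
        obtain ⟨k0, hk0⟩ := hg
        exact prod_abs_le x g hle1 k0 _ (le_of_eq (by rw [hk0]))
    have hcore := part1_core |lam| (tP m n a t s) (tP m n a s t)
      (tR m n a t) (tR m n a s) |x t| |x s| htpos (abs_nonneg _)
      (tP_le_tR m n a t s) (tP_le_tR m n a s t) (ht s) hI hII
    have hmem : (t, s) ∈ Finset.univ.filter
        (fun p : Fin n × Fin n => p.1 ≠ p.2) := by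
      simp [Finset.mem_filter, hst.symm]
    calc |lam| ≤ min (tR m n a t) (tDelta m n a t s) :=
          le_min hcore.1 (by rw [tDelta_expand]; exact hcore.2)
      _ ≤ OmegaTildeMax m n hn a :=
          Finset.le_sup' (fun p : Fin n × Fin n =>
            min (tR m n a p.1) (tDelta m n a p.1 p.2)) hmem
      _ ≤ _ := le_max_right _ _
  · -- Part 2: Ω_max ≤ WangBound
    refine max_le (Finset.sup'_le _ _ ?_) (Finset.sup'_le _ _ ?_)
    · intro p hp
      refine le_trans (min_le_right _ _) (le_trans ?_
        (Finset.le_sup' (fun p : Fin n × Fin n => max (max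
          ((1/2) * (tR m n a p.1 - a p.1 (fun _ => p.2) + tP m n a p.2 p.1 +
            Real.sqrt (tLambda m n a p.1 p.2)))
          (tR m n a p.1 - a p.1 (fun _ => p.2)))
          (tP m n a p.2 p.1)) hp))
      exact le_max_right _ _
    · intro p hp
      have hp' : p.1 ≠ p.2 := (Finset.mem_filter.mp hp).2
      have hP1R := tP_le_tR m n a p.1 p.2
      have hP2R := tP_le_tR m n a p.2 p.1
      have hc0 : 0 ≤ (tR m n a p.1 - tP m n a p.1 p.2) *
          (tR m n a p.2 - tP m n a p.2 p.1) :=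
        mul_nonneg (by linarith) (by linarith)
      have hge2 := half_ge (tP m n a p.1 p.2) (tP m n a p.2 p.1) _ hc0
      have heq := half_eq (tP m n a p.1 p.2) (tP m n a p.2 p.1) _ hc0
      rw [← tDelta_expand m n a p.1 p.2] at hge2 heq
      have hor : tR m n a p.1 ≤ tDelta m n a p.1 p.2 ∨
          tR m n a p.2 ≤ tDelta m n a p.1 p.2 := by
        by_contra hcon
        push_neg at hcon
        obtain ⟨hc1, hc2⟩ := hcon
        nlinarith [heq,
          mul_pos (show (0:ℝ) < tR m n a p.1 - tP m n a p.1 p.2 by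
            linarith [hge2.1]) (show (0:ℝ) < tR m n a p.2 - tDelta m n a p.1 p.2 by
            linarith),
          mul_nonneg (show (0:ℝ) ≤ tR m n a p.1 - tDelta m n a p.1 p.2 by linarith)
            (show (0:ℝ) ≤ tDelta m n a p.1 p.2 - tP m n a p.2 p.1 by
              linarith [hge2.2])]
      rcases hor with hor | hor
      · -- Δ ≥ R_{p.1}: use the pair (p.2, p.1)
        have hsym : tDelta m n a p.2 p.1 = tDelta m n a p.1 p.2 :=
          tDelta_symm m n a p.2 p.1
        have hw := wang_case m n hm1 a hnn p.2 p.1 (by rw [hsym]; exact hor)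
        have hmem2 : (p.2, p.1) ∈ Finset.univ.filter
            (fun q : Fin n × Fin n => q.1 ≠ q.2) := by
          simp [Finset.mem_filter, hp'.symm]
        calc min (tR m n a p.1) (tDelta m n a p.1 p.2)
            ≤ tR m n a p.1 := min_le_left _ _
          _ ≤ tDelta m n a p.2 p.1 := by rw [hsym]; exact hor
          _ ≤ _ := hw.trans (Finset.le_sup' (fun q : Fin n × Fin n => max (max
              ((1/2) * (tR m n a q.1 - a q.1 (fun _ => q.2) + tP m n a q.2 q.1 +
                Real.sqrt (tLambda m n a q.1 q.2)))
              (tR m n a q.1 - a q.1 (fun _ => q.2)))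
              (tP m n a q.2 q.1)) hmem2)
      · -- Δ ≥ R_{p.2}: use the pair (p.1, p.2)
        have hw := wang_case m n hm1 a hnn p.1 p.2 hor
        calc min (tR m n a p.1) (tDelta m n a p.1 p.2)
            ≤ tDelta m n a p.1 p.2 := min_le_right _ _
          _ ≤ _ := hw.trans (Finset.le_sup' (fun q : Fin n × Fin n => max (max
              ((1/2) * (tR m n a q.1 - a q.1 (fun _ => q.2) + tP m n a q.2 q.1 +
                Real.sqrt (tLambda m n a q.1 q.2)))
              (tR m n a q.1 - a q.1 (fun _ => q.2)))
              (tP m n a q.2 q.1)) hp)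
  · -- Part 3: WangBound ≤ max_i R_i
    refine Finset.sup'_le _ _ ?_
    intro p hp
    have hB1 : tR m n a p.1 ≤
        Finset.univ.sup' ⟨⟨0, by omega⟩, Finset.mem_univ _⟩ (tR m n a) :=
      Finset.le_sup' _ (Finset.mem_univ _)
    have hB2 : tR m n a p.2 ≤
        Finset.univ.sup' ⟨⟨0, by omega⟩, Finset.mem_univ _⟩ (tR m n a) :=
      Finset.le_sup' _ (Finset.mem_univ _)
    have hb : 0 ≤ a p.1 (fun _ => p.2) := hnn _ _
    have hP2R := tP_le_tR m n a p.2 p.1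
    have hP2nn := tP_nonneg m n a p.2 p.1
    refine max_le (max_le ?_ (by linarith)) (by linarith)
    rw [tLambda_expand]
    refine sqrt_half_le _ _ _ _ (mul_nonneg hb (by linarith)) (by linarith)
      (by linarith) ?_
    nlinarith [mul_nonneg
      (show (0:ℝ) ≤ Finset.univ.sup' ⟨⟨0, by omega⟩, Finset.mem_univ _⟩ (tR m n a)
        - tR m n a p.1 by linarith)
      (show (0:ℝ) ≤ Finset.univ.sup' ⟨⟨0, by omega⟩, Finset.mem_univ _⟩ (tR m n a)
        - tP m n a p.2 p.1 by linarith),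
      mul_nonneg hb
      (show (0:ℝ) ≤ Finset.univ.sup' ⟨⟨0, by omega⟩, Finset.mem_univ _⟩ (tR m n a)
        - tR m n a p.2 by linarith)]
end

section
/- Let A = (a_{i_1...i_m}) be a real tensor of order m and dimension n (m, n ≥ 2). Then every Z-eigenvalue λ of A satisfies λ ∈ K(A) = ∪_{i ∈ N} K_i(A); that is, there exists an index i ∈ N with |λ| ≤ R_i(A). -/
open Finset

/-- Gershgorin-type theorem: every Z-eigenvalue of `A` lies in `K(A)`. -/
theorem zeigenvalue_in_K (m n : ℕ) (hm : 2 ≤ m) (hn : 2 ≤ n)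
    (a : Fin n → (Fin (m-1) → Fin n) → ℝ) (lam : ℝ) (x : Fin n → ℝ)
    (hx : IsZEigenpair m n a lam x) :
    ∃ i : Fin n, |lam| ≤ tR m n a i := by
  obtain ⟨heig, hnorm⟩ := hx
  obtain ⟨i, -, hi⟩ := Finset.exists_max_image Finset.univ (fun j => |x j|)
    ⟨⟨0, by omega⟩, Finset.mem_univ _⟩
  simp only [Finset.mem_univ, forall_true_left] at hi
  have hxi : 0 < |x i| := by
    rcases lt_or_eq_of_le (abs_nonneg (x i)) with h | h
    · exact h
    · exfalso
      have : ∀ j, x j = 0 := fun j => abs_eq_zero.mp (le_antisymm (h ▸ hi j) (abs_nonneg _))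
      simp [this] at hnorm
  have hle1 : |x i| ≤ 1 := by
    have h1 : x i ^ 2 ≤ 1 := by
      rw [← hnorm]
      exact Finset.single_le_sum (fun j _ => sq_nonneg (x j)) (Finset.mem_univ i)
    nlinarith [abs_nonneg (x i), sq_abs (x i)]
  refine ⟨i, ?_⟩
  have key : |lam| * |x i| ≤ tR m n a i * |x i| := by
    calc |lam| * |x i| = |lam * x i| := (abs_mul _ _).symm
      _ = |tAx m n a x i| := by rw [heig i]
      _ ≤ ∑ g : Fin (m-1) → Fin n, |a i g * ∏ k, x (g k)| := Finset.abs_sum_le_sum_abs _ _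
      _ ≤ ∑ g : Fin (m-1) → Fin n, |a i g| * |x i| := by
          refine Finset.sum_le_sum fun g _ => ?_
          rw [abs_mul]
          refine mul_le_mul_of_nonneg_left ?_ (abs_nonneg _)
          calc |∏ k, x (g k)| = ∏ k, |x (g k)| := by rw [Finset.abs_prod]
            _ ≤ ∏ _k : Fin (m-1), |x i| :=
                Finset.prod_le_prod (fun k _ => abs_nonneg _) (fun k _ => hi (g k))
            _ = |x i| ^ (m - 1) := by rw [Finset.prod_const, Finset.card_univ, Fintype.card_fin]
            _ ≤ |x i| ^ 1 := pow_le_pow_of_le_one (abs_nonneg _) hle1 (by omega)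
            _ = |x i| := pow_one _
      _ = tR m n a i * |x i| := by rw [tR, Finset.sum_mul]
  exact le_of_mul_le_mul_right key hxi
end

section
/- Let A = (a_{i_1...i_m}) be a real tensor of order m and dimension n (m, n ≥ 2). Then every Z-eigenvalue λ of A lies in M(A): that is, there exist indices i, j ∈ N with i ≠ j such that either (|λ| − (R_i(A) − |a_{ij...j}|))·(|λ| − P_j^i(A)) ≤ |a_{ij...j}|·(R_j(A) − P_j^i(A)), or (|λ| < R_i(A) − |a_{ij...j}| and |λ| < P_j^i(A)). -/
open Finset

/-- Brauer-type theorem: every Z-eigenvalue of `A` lies in `M(A)`. -/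
theorem zeigenvalue_in_M (m n : ℕ) (hm : 2 ≤ m) (hn : 2 ≤ n)
    (a : Fin n → (Fin (m-1) → Fin n) → ℝ) (lam : ℝ) (x : Fin n → ℝ)
    (hx : IsZEigenpair m n a lam x) :
    ∃ i j : Fin n, i ≠ j ∧
      ((|lam| - (tR m n a i - |a i (fun _ => j)|)) * (|lam| - tP m n a j i) ≤
          |a i (fun _ => j)| * (tR m n a j - tP m n a j i) ∨
       (|lam| < tR m n a i - |a i (fun _ => j)| ∧ |lam| < tP m n a j i)) := by
  obtain ⟨heig, hnorm⟩ := hx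
  have hn0 : 0 < n := by omega
  haveI : NeZero n := ⟨by omega⟩
  -- choose t maximizing |x k|
  obtain ⟨t, ht⟩ := Finite.exists_max (fun k : Fin n => |x k|)
  -- choose s maximizing |x k| over k ≠ t
  have hne : (Finset.univ.erase t).Nonempty := by
    rw [← Finset.card_pos, Finset.card_erase_of_mem (Finset.mem_univ t), Finset.card_univ,
      Fintype.card_fin]
    omega
  obtain ⟨s, hsmem, hs⟩ := Finset.exists_max_image (Finset.univ.erase t)
    (fun k : Fin n => |x k|) hne
  have hst : s ≠ t := Finset.ne_of_mem_erase hsmem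
  have hs' : ∀ k, k ≠ t → |x k| ≤ |x s| := fun k hk =>
    hs k (Finset.mem_erase.2 ⟨hk, Finset.mem_univ k⟩)
  -- basic facts
  have hxt0 : 0 < |x t| := by
    rcases eq_or_lt_of_le (abs_nonneg (x t)) with h | h
    · exfalso
      have hz : ∀ k, x k = 0 := by
        intro k
        have := ht k
        rw [← h] at this
        exact abs_eq_zero.1 (le_antisymm this (abs_nonneg _))
      simp [hz] at hnorm
    · exact h
  have hxt1 : |x t| ≤ 1 := by
    have h1 : x t ^ 2 ≤ ∑ i, x i ^ 2 :=
      Finset.single_le_sum (fun i _ => sq_nonneg (x i)) (Finset.mem_univ t)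
    rw [hnorm] at h1
    nlinarith [abs_nonneg (x t), sq_abs (x t)]
  have hxs1 : |x s| ≤ 1 := le_trans (ht s) hxt1
  have hm1 : 1 ≤ m - 1 := by omega
  -- product bound
  have hprod : ∀ (c : ℝ), 0 ≤ c → c ≤ 1 → ∀ g : Fin (m-1) → Fin n,
      (∀ k, |x (g k)| ≤ c) → |∏ k, x (g k)| ≤ c := by
    intro c hc0 hc1 g hg
    rw [Finset.abs_prod]
    calc ∏ k, |x (g k)| ≤ ∏ _k : Fin (m-1), c :=
          Finset.prod_le_prod (fun k _ => abs_nonneg _) (fun k _ => hg k)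
      _ = c ^ (m - 1) := by rw [Finset.prod_const, Finset.card_univ, Fintype.card_fin]
      _ ≤ c ^ 1 := pow_le_pow_of_le_one hc0 hc1 hm1
      _ = c := pow_one c
  have hprodt : ∀ g : Fin (m-1) → Fin n, |∏ k, x (g k)| ≤ |x t| :=
    fun g => hprod _ (abs_nonneg _) hxt1 g (fun k => ht (g k))
  set c : Fin (m-1) → Fin n := fun _ => s with hc
  set AA := |lam| - (tR m n a t - |a t c|) with hAA
  set BB := |lam| - tP m n a s t with hBB
  set CC := tR m n a s - tP m n a s t with hCC
  have habs : (0:ℝ) ≤ |a t c| := abs_nonneg _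
  -- inequality 1
  have key1 : AA * |x t| ≤ |a t c| * |x s| := by
    have e1 : |lam| * |x t| = |tAx m n a x t| := by rw [heig t, abs_mul]
    have e2 : |tAx m n a x t| ≤ ∑ g : Fin (m-1) → Fin n, |a t g| * |∏ k, x (g k)| := by
      unfold tAx
      refine le_trans (Finset.abs_sum_le_sum_abs _ _) ?_
      exact le_of_eq (Finset.sum_congr rfl (fun g _ => abs_mul _ _))
    have e3 : ∑ g : Fin (m-1) → Fin n, |a t g| * |∏ k, x (g k)|
        ≤ |a t c| * |x s| + (tR m n a t - |a t c|) * |x t| := by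
      have hsplit : ∑ g : Fin (m-1) → Fin n, |a t g| * |∏ k, x (g k)|
          = (∑ g ∈ Finset.univ.erase c, |a t g| * |∏ k, x (g k)|)
            + |a t c| * |∏ k, x (c k)| :=
        (Finset.sum_erase_add Finset.univ _ (Finset.mem_univ c)).symm
      rw [hsplit]
      have hb1 : |a t c| * |∏ k, x (c k)| ≤ |a t c| * |x s| := by
        refine mul_le_mul_of_nonneg_left ?_ habs
        exact hprod _ (abs_nonneg _) hxs1 c (fun k => le_refl _)
      have hb2 : ∑ g ∈ Finset.univ.erase c, |a t g| * |∏ k, x (g k)|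
          ≤ (tR m n a t - |a t c|) * |x t| := by
        have : (tR m n a t - |a t c|) = ∑ g ∈ Finset.univ.erase c, |a t g| := by
          unfold tR
          rw [sub_eq_iff_eq_add]
          exact (Finset.sum_erase_add Finset.univ _ (Finset.mem_univ c)).symm
        rw [this, Finset.sum_mul]
        exact Finset.sum_le_sum (fun g _ =>
          mul_le_mul_of_nonneg_left (hprodt g) (abs_nonneg _))
      linarith
    rw [hAA]
    nlinarith [e1, e2, e3]
  -- inequality 2
  have key2 : BB * |x s| ≤ CC * |x t| := by
    have e1 : |lam| * |x s| = |tAx m n a x s| := by rw [heig s, abs_mul]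
    have e2 : |tAx m n a x s| ≤ ∑ g : Fin (m-1) → Fin n, |a s g| * |∏ k, x (g k)| := by
      unfold tAx
      refine le_trans (Finset.abs_sum_le_sum_abs _ _) ?_
      exact le_of_eq (Finset.sum_congr rfl (fun g _ => abs_mul _ _))
    have e3 : ∑ g : Fin (m-1) → Fin n, |a s g| * |∏ k, x (g k)|
        ≤ tP m n a s t * |x s| + (tR m n a s - tP m n a s t) * |x t| := by
      have hsplit := Finset.sum_filter_add_sum_filter_not Finset.univ
        (fun g : Fin (m-1) → Fin n => ∀ k, g k ≠ t)
        (fun g => |a s g| * |∏ k, x (g k)|)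
      rw [← hsplit]
      have hb1 : ∑ g ∈ Finset.univ.filter (fun g : Fin (m-1) → Fin n => ∀ k, g k ≠ t),
          |a s g| * |∏ k, x (g k)| ≤ tP m n a s t * |x s| := by
        unfold tP
        rw [Finset.sum_mul]
        refine Finset.sum_le_sum (fun g hg => ?_)
        refine mul_le_mul_of_nonneg_left ?_ (abs_nonneg _)
        have hgk := (Finset.mem_filter.1 hg).2
        exact hprod _ (abs_nonneg _) hxs1 g (fun k => hs' (g k) (hgk k))
      have hb2 : ∑ g ∈ Finset.univ.filter (fun g : Fin (m-1) → Fin n => ¬ ∀ k, g k ≠ t),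
          |a s g| * |∏ k, x (g k)| ≤ (tR m n a s - tP m n a s t) * |x t| := by
        have heq : tR m n a s - tP m n a s t
            = ∑ g ∈ Finset.univ.filter (fun g : Fin (m-1) → Fin n => ¬ ∀ k, g k ≠ t),
              |a s g| := by
          unfold tR tP
          rw [sub_eq_iff_eq_add, add_comm]
          exact (Finset.sum_filter_add_sum_filter_not Finset.univ _ _).symm
        rw [heq, Finset.sum_mul]
        exact Finset.sum_le_sum (fun g _ =>
          mul_le_mul_of_nonneg_left (hprodt g) (abs_nonneg _))
      linarith
    rw [hBB, hCC]
    nlinarith [e1, e2, e3]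
  have hCC0 : 0 ≤ CC := by
    rw [hCC]
    unfold tR tP
    rw [sub_nonneg]
    exact Finset.sum_le_sum_of_subset_of_nonneg (Finset.filter_subset _ _)
      (fun g _ _ => abs_nonneg _)
  refine ⟨t, s, fun h => hst h.symm, ?_⟩
  rcases lt_or_ge AA 0 with hA | hA
  · rcases lt_or_ge BB 0 with hB | hB
    · right
      constructor
      · linarith [hAA]
      · linarith [hBB]
    · left
      nlinarith [abs_nonneg (x s)]
  · rcases lt_or_ge BB 0 with hB | hB
    · left
      nlinarith [abs_nonneg (x s)]
    · left
      have h1 : AA * BB * |x t| ≤ |a t c| * CC * |x t| := by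
        calc AA * BB * |x t| = BB * (AA * |x t|) := by ring
          _ ≤ BB * (|a t c| * |x s|) := mul_le_mul_of_nonneg_left key1 hB
          _ = |a t c| * (BB * |x s|) := by ring
          _ ≤ |a t c| * (CC * |x t|) := mul_le_mul_of_nonneg_left key2 habs
          _ = |a t c| * CC * |x t| := by ring
      exact le_of_mul_le_mul_right h1 hxt0
end

section
/- Let A = (a_{i_1...i_m}) be a real tensor of order m and dimension n (m, n ≥ 2), let λ be a Z-eigenvalue of A with Z-eigenvector x ∈ ℝⁿ, and let t, s ∈ N be distinct indices such that |x_t| ≥ |x_s| ≥ |x_i| for all i ∈ N with i ∉ {t, s}. Then (|λ| − P_t^s(A))·|x_t| ≤ (R_t(A) − P_t^s(A))·|x_s|. -/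
open Finset

theorem ineq_t (m n : ℕ) (hm : 2 ≤ m) (hn : 2 ≤ n)
    (a : Fin n → (Fin (m-1) → Fin n) → ℝ) (lam : ℝ) (x : Fin n → ℝ)
    (hx : IsZEigenpair m n a lam x) (t s : Fin n) (hts : t ≠ s)
    (h1 : |x s| ≤ |x t|) (h2 : ∀ i, i ≠ t → i ≠ s → |x i| ≤ |x s|) :
    (|lam| - tP m n a t s) * |x t| ≤ (tR m n a t - tP m n a t s) * |x s| := by
  obtain ⟨heig, hnorm⟩ := hx
  -- |x i| ≤ 1 for all i
  have hle1 : ∀ i, |x i| ≤ 1 := by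
    intro i
    have h : x i ^ 2 ≤ 1 := by
      have := Finset.single_le_sum (f := fun j => x j ^ 2)
        (fun j _ => sq_nonneg _) (Finset.mem_univ i)
      linarith
    nlinarith [sq_abs (x i), abs_nonneg (x i)]
  have hlet : ∀ i, |x i| ≤ |x t| := by
    intro i
    by_cases hi : i = t
    · simp [hi]
    by_cases hi2 : i = s
    · simpa [hi2] using h1
    exact le_trans (h2 i hi hi2) h1
  have hxt1 : |x t| ≤ 1 := hle1 t
  have hxs0 : (0:ℝ) ≤ |x s| := abs_nonneg _
  have hxt0 : (0:ℝ) ≤ |x t| := abs_nonneg _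
  -- index k0 exists since m - 1 ≥ 1
  have hm1 : 0 < m - 1 := by omega
  -- product bounds
  have hprod_t : ∀ g : Fin (m-1) → Fin n, ∏ k, |x (g k)| ≤ |x t| := by
    intro g
    set k0 : Fin (m-1) := ⟨0, hm1⟩
    rw [← Finset.mul_prod_erase Finset.univ _ (Finset.mem_univ k0)]
    calc |x (g k0)| * ∏ k ∈ Finset.univ.erase k0, |x (g k)|
        ≤ |x t| * 1 := by
          apply mul_le_mul (hlet _) ?_ (Finset.prod_nonneg fun _ _ => abs_nonneg _) hxt0
          exact Finset.prod_le_one (fun _ _ => abs_nonneg _) (fun k _ => hle1 _)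
      _ = |x t| := mul_one _
  have hprod_s : ∀ g : Fin (m-1) → Fin n, (∃ k, g k = s) → ∏ k, |x (g k)| ≤ |x s| := by
    intro g ⟨k0, hk0⟩
    rw [← Finset.mul_prod_erase Finset.univ _ (Finset.mem_univ k0)]
    calc |x (g k0)| * ∏ k ∈ Finset.univ.erase k0, |x (g k)|
        ≤ |x s| * 1 := by
          apply mul_le_mul (by rw [hk0]) ?_ (Finset.prod_nonneg fun _ _ => abs_nonneg _) hxs0
          exact Finset.prod_le_one (fun _ _ => abs_nonneg _) (fun k _ => hle1 _)
      _ = |x s| := mul_one _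
  -- main estimate
  have key : |lam| * |x t| ≤ tP m n a t s * |x t| + (tR m n a t - tP m n a t s) * |x s| := by
    have h0 : |lam| * |x t| = |tAx m n a x t| := by
      rw [heig t, abs_mul]
    have h1' : |tAx m n a x t| ≤ ∑ g : Fin (m-1) → Fin n, |a t g| * ∏ k, |x (g k)| := by
      refine le_trans (Finset.abs_sum_le_sum_abs _ _) (Finset.sum_le_sum fun g _ => ?_)
      rw [abs_mul, abs_prod]
    set Pset := Finset.univ.filter (fun g : Fin (m-1) → Fin n => ∀ k, g k ≠ s) with hP
    have hsplit : ∑ g : Fin (m-1) → Fin n, |a t g| * ∏ k, |x (g k)|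
        = (∑ g ∈ Pset, |a t g| * ∏ k, |x (g k)|)
          + ∑ g ∈ Finset.univ.filter (fun g : Fin (m-1) → Fin n => ¬ ∀ k, g k ≠ s),
              |a t g| * ∏ k, |x (g k)| :=
      (Finset.sum_filter_add_sum_filter_not _ _ _).symm
    have hbnd1 : ∑ g ∈ Pset, |a t g| * ∏ k, |x (g k)| ≤ tP m n a t s * |x t| := by
      rw [tP, Finset.sum_mul]
      exact Finset.sum_le_sum fun g _ =>
        mul_le_mul_of_nonneg_left (hprod_t g) (abs_nonneg _)
    have hbnd2 : ∑ g ∈ Finset.univ.filter (fun g : Fin (m-1) → Fin n => ¬ ∀ k, g k ≠ s),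
          |a t g| * ∏ k, |x (g k)| ≤ (tR m n a t - tP m n a t s) * |x s| := by
      have hRP : tR m n a t - tP m n a t s
          = ∑ g ∈ Finset.univ.filter (fun g : Fin (m-1) → Fin n => ¬ ∀ k, g k ≠ s), |a t g| := by
        rw [tR, tP]
        have := Finset.sum_filter_add_sum_filter_not (Finset.univ : Finset (Fin (m-1) → Fin n))
          (fun g => ∀ k, g k ≠ s) (fun g => |a t g|)
        linarith
      rw [hRP, Finset.sum_mul]
      refine Finset.sum_le_sum fun g hg => ?_
      simp only [Finset.mem_filter, not_forall, not_not] at hg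
      exact mul_le_mul_of_nonneg_left (hprod_s g hg.2) (abs_nonneg _)
    calc |lam| * |x t| = |tAx m n a x t| := h0
      _ ≤ _ := h1'
      _ = _ := hsplit
      _ ≤ _ := add_le_add hbnd1 hbnd2
  nlinarith [key]
end

section
/- Let A = (a_{i_1...i_m}) be a real tensor of order m and dimension n (m, n ≥ 2), let λ be a Z-eigenvalue of A with Z-eigenvector x ∈ ℝⁿ, and let t, s ∈ N be distinct indices such that |x_t| ≥ |x_s| ≥ |x_i| for all i ∈ N with i ∉ {t, s}. Then (|λ| − P_s^t(A))·|x_s| ≤ (R_s(A) − P_s^t(A))·|x_t|. -/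
open Finset

theorem ineq_s (m n : ℕ) (hm : 2 ≤ m) (hn : 2 ≤ n)
    (a : Fin n → (Fin (m-1) → Fin n) → ℝ) (lam : ℝ) (x : Fin n → ℝ)
    (hx : IsZEigenpair m n a lam x) (t s : Fin n) (hts : t ≠ s)
    (h1 : |x s| ≤ |x t|) (h2 : ∀ i, i ≠ t → i ≠ s → |x i| ≤ |x s|) :
    (|lam| - tP m n a s t) * |x s| ≤ (tR m n a s - tP m n a s t) * |x t| := by
  obtain ⟨heig, hnorm⟩ := hx
  have habs1 : ∀ i : Fin n, |x i| ≤ 1 := by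
    intro i
    have hsq : x i ^ 2 ≤ 1 := by
      calc x i ^ 2 ≤ ∑ j, x j ^ 2 :=
            Finset.single_le_sum (f := fun j => x j ^ 2) (fun j _ => sq_nonneg _) (Finset.mem_univ i)
        _ = 1 := hnorm
    nlinarith [abs_nonneg (x i), sq_abs (x i)]
  have hallt : ∀ i : Fin n, |x i| ≤ |x t| := by
    intro i
    by_cases hit : i = t
    · simp [hit]
    by_cases his : i = s
    · simpa [his] using h1
    · exact (h2 i hit his).trans h1
  have hm1 : 1 ≤ m - 1 := by omega
  have prodbd : ∀ (g : Fin (m-1) → Fin n) (c : ℝ), 0 ≤ c → c ≤ 1 →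
      (∀ k, |x (g k)| ≤ c) → |∏ k, x (g k)| ≤ c := by
    intro g c hc0 hc1 hbd
    calc |∏ k, x (g k)| = ∏ k, |x (g k)| := by rw [Finset.abs_prod]
      _ ≤ ∏ _k : Fin (m-1), c :=
          Finset.prod_le_prod (fun k _ => abs_nonneg _) (fun k _ => hbd k)
      _ = c ^ (m - 1) := by simp
      _ ≤ c ^ 1 := pow_le_pow_of_le_one hc0 hc1 hm1
      _ = c := pow_one c
  set P := tP m n a s t with hP
  set R := tR m n a s with hR
  have key : |lam| * |x s| ≤ P * |x s| + (R - P) * |x t| := by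
    have h0 : |lam| * |x s| = |tAx m n a x s| := by rw [heig s, abs_mul]
    rw [h0]
    have hRP : R - P = ∑ g ∈ Finset.univ.filter
        (fun g : Fin (m-1) → Fin n => ¬ ∀ k, g k ≠ t), |a s g| := by
      have hsplit : R = (∑ g ∈ Finset.univ.filter
            (fun g : Fin (m-1) → Fin n => ∀ k, g k ≠ t), |a s g|)
          + ∑ g ∈ Finset.univ.filter
            (fun g : Fin (m-1) → Fin n => ¬ ∀ k, g k ≠ t), |a s g| := by
        rw [hR, tR, ← Finset.sum_filter_add_sum_filter_not Finset.univ
          (fun g : Fin (m-1) → Fin n => ∀ k, g k ≠ t)]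
      rw [hsplit, hP, tP]; ring
    calc |tAx m n a x s|
        ≤ ∑ g : Fin (m-1) → Fin n, |a s g| * |∏ k, x (g k)| := by
          refine (Finset.abs_sum_le_sum_abs _ _).trans (le_of_eq ?_)
          exact Finset.sum_congr rfl (fun g _ => abs_mul _ _)
      _ = (∑ g ∈ Finset.univ.filter
            (fun g : Fin (m-1) → Fin n => ∀ k, g k ≠ t), |a s g| * |∏ k, x (g k)|)
          + ∑ g ∈ Finset.univ.filter
            (fun g : Fin (m-1) → Fin n => ¬ ∀ k, g k ≠ t), |a s g| * |∏ k, x (g k)| := by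
          rw [Finset.sum_filter_add_sum_filter_not]
      _ ≤ (∑ g ∈ Finset.univ.filter
            (fun g : Fin (m-1) → Fin n => ∀ k, g k ≠ t), |a s g| * |x s|)
          + ∑ g ∈ Finset.univ.filter
            (fun g : Fin (m-1) → Fin n => ¬ ∀ k, g k ≠ t), |a s g| * |x t| := by
          refine add_le_add (Finset.sum_le_sum ?_) (Finset.sum_le_sum ?_)
          · intro g hg
            rw [Finset.mem_filter] at hg
            refine mul_le_mul_of_nonneg_left ?_ (abs_nonneg _)
            refine prodbd g _ (abs_nonneg _) (habs1 s) ?_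
            intro k
            have hkt : g k ≠ t := hg.2 k
            by_cases hks : g k = s
            · simp [hks]
            · exact h2 (g k) hkt hks
          · intro g _
            refine mul_le_mul_of_nonneg_left ?_ (abs_nonneg _)
            exact prodbd g _ (abs_nonneg _) (habs1 t) (fun k => hallt (g k))
      _ = P * |x s| + (R - P) * |x t| := by
          rw [← Finset.sum_mul, ← Finset.sum_mul, hRP, hP, tP]
  nlinarith [key]
end

section
/- Let A = (a_{i_1...i_m}) be a real tensor of order m and dimension n (m, n ≥ 2), let λ be a Z-eigenvalue of A with Z-eigenvector x ∈ ℝⁿ, and let t, s ∈ N be distinct indices such that |x_t| ≥ |x_s| ≥ |x_i| for all i ∈ N with i ∉ {t, s}. If |x_s| > 0 and moreover |λ| ≥ P_t^s(A) or |λ| ≥ P_s^t(A), then (|λ| − P_t^s(A))·(|λ| − P_s^t(A)) ≤ (R_t(A) − P_t^s(A))·(R_s(A) − P_s^t(A)). -/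
open Finset

lemma prod_le_single_aux {α : Type*} [Fintype α] [DecidableEq α] (f : α → ℝ) (h0 : ∀ k, 0 ≤ f k)
    (h1 : ∀ k, f k ≤ 1) (k0 : α) {c : ℝ} (hk0 : f k0 ≤ c) : ∏ k, f k ≤ c := by
  rw [← Finset.mul_prod_erase Finset.univ f (Finset.mem_univ k0)]
  have h2 : ∏ k ∈ Finset.univ.erase k0, f k ≤ 1 :=
    Finset.prod_le_one (fun _ _ => h0 _) (fun _ _ => h1 _)
  have h3 : 0 ≤ ∏ k ∈ Finset.univ.erase k0, f k := Finset.prod_nonneg fun _ _ => h0 _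
  nlinarith [h0 k0]

lemma key_row_bound (m n : ℕ) (hm : 2 ≤ m) (a : Fin n → (Fin (m-1) → Fin n) → ℝ)
    (lam : ℝ) (x : Fin n → ℝ) (heig : ∀ i, tAx m n a x i = lam * x i)
    (hx1 : ∀ k, |x k| ≤ 1) (i j : Fin n) (c d : ℝ) (hc1 : c ≤ 1)
    (hc : ∀ k, k ≠ j → |x k| ≤ c) (hd : |x j| ≤ d) :
    |lam| * |x i| ≤ tP m n a i j * c + (tR m n a i - tP m n a i j) * d := by
  have hm1 : 0 < m - 1 := by omega
  have step1 : |lam| * |x i| ≤ ∑ g : Fin (m-1) → Fin n, |a i g| * ∏ k, |x (g k)| := by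
    rw [← abs_mul, ← heig i, tAx]
    refine (Finset.abs_sum_le_sum_abs _ _).trans_eq ?_
    exact Finset.sum_congr rfl fun g _ => by rw [abs_mul, Finset.abs_prod]
  refine step1.trans ?_
  rw [← Finset.sum_filter_add_sum_filter_not Finset.univ
    (fun g : Fin (m-1) → Fin n => ∀ k, g k ≠ j)
    (fun g => |a i g| * ∏ k, |x (g k)|)]
  have hRP : ∑ g ∈ Finset.univ.filter (fun g : Fin (m-1) → Fin n => ¬ ∀ k, g k ≠ j),
      |a i g| = tR m n a i - tP m n a i j := by
    have := Finset.sum_filter_add_sum_filter_not Finset.univ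
      (fun g : Fin (m-1) → Fin n => ∀ k, g k ≠ j) (fun g => |a i g|)
    rw [tR, tP]
    linarith [this]
  have b1 : ∑ g ∈ Finset.univ.filter (fun g : Fin (m-1) → Fin n => ∀ k, g k ≠ j),
      |a i g| * ∏ k, |x (g k)| ≤ tP m n a i j * c := by
    rw [tP, Finset.sum_mul]
    refine Finset.sum_le_sum fun g hg => ?_
    have hP := (Finset.mem_filter.mp hg).2
    refine mul_le_mul_of_nonneg_left ?_ (abs_nonneg _)
    exact prod_le_single_aux (fun k => |x (g k)|) (fun _ => abs_nonneg _)
      (fun k => hx1 _) ⟨0, hm1⟩ (hc _ (hP ⟨0, hm1⟩))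
  have b2 : ∑ g ∈ Finset.univ.filter (fun g : Fin (m-1) → Fin n => ¬ ∀ k, g k ≠ j),
      |a i g| * ∏ k, |x (g k)| ≤ (tR m n a i - tP m n a i j) * d := by
    rw [← hRP, Finset.sum_mul]
    refine Finset.sum_le_sum fun g hg => ?_
    have hP := (Finset.mem_filter.mp hg).2
    push_neg at hP
    obtain ⟨k1, hk1⟩ := hP
    refine mul_le_mul_of_nonneg_left ?_ (abs_nonneg _)
    refine prod_le_single_aux (fun k => |x (g k)|) (fun _ => abs_nonneg _)
      (fun k => hx1 _) k1 ?_
    simp only [hk1]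
    exact hd
  linarith [b1, b2]

theorem product_ineq (m n : ℕ) (hm : 2 ≤ m) (hn : 2 ≤ n)
    (a : Fin n → (Fin (m-1) → Fin n) → ℝ) (lam : ℝ) (x : Fin n → ℝ)
    (hx : IsZEigenpair m n a lam x) (t s : Fin n) (hts : t ≠ s)
    (h1 : |x s| ≤ |x t|) (h2 : ∀ i, i ≠ t → i ≠ s → |x i| ≤ |x s|)
    (hs : 0 < |x s|)
    (hl : tP m n a t s ≤ |lam| ∨ tP m n a s t ≤ |lam|) :
    (|lam| - tP m n a t s) * (|lam| - tP m n a s t) ≤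
      (tR m n a t - tP m n a t s) * (tR m n a s - tP m n a s t) := by
  obtain ⟨heig, hnorm⟩ := hx
  have hx1 : ∀ k, |x k| ≤ 1 := by
    intro k
    have hk : x k ^ 2 ≤ 1 := by
      calc x k ^ 2 ≤ ∑ i, x i ^ 2 :=
            Finset.single_le_sum (fun i _ => sq_nonneg (x i)) (Finset.mem_univ k)
        _ = 1 := hnorm
    nlinarith [abs_nonneg (x k), sq_abs (x k)]
  have hct : ∀ k, |x k| ≤ |x t| := by
    intro k
    by_cases hkt : k = t
    · simp [hkt]
    by_cases hks : k = s
    · rw [hks]; exact h1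
    exact (h2 k hkt hks).trans h1
  have hcs : ∀ k, k ≠ t → |x k| ≤ |x s| := by
    intro k hkt
    by_cases hks : k = s
    · simp [hks]
    exact h2 k hkt hks
  have ineq1 : |lam| * |x t| ≤ tP m n a t s * |x t| + (tR m n a t - tP m n a t s) * |x s| :=
    key_row_bound m n hm a lam x heig hx1 t s (|x t|) (|x s|) (hx1 t)
      (fun k _ => hct k) le_rfl
  have ineq2 : |lam| * |x s| ≤ tP m n a s t * |x s| + (tR m n a s - tP m n a s t) * |x t| :=
    key_row_bound m n hm a lam x heig hx1 s t (|x s|) (|x t|) (hx1 s) hcs le_rfl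
  have hPRt : tP m n a t s ≤ tR m n a t := by
    rw [tP, tR]
    exact Finset.sum_le_sum_of_subset_of_nonneg (Finset.filter_subset _ _)
      (fun g _ _ => abs_nonneg _)
  have hPRs : tP m n a s t ≤ tR m n a s := by
    rw [tP, tR]
    exact Finset.sum_le_sum_of_subset_of_nonneg (Finset.filter_subset _ _)
      (fun g _ _ => abs_nonneg _)
  have hct0 : 0 < |x t| := lt_of_lt_of_le hs h1
  have e1 : (|lam| - tP m n a t s) * |x t| ≤ (tR m n a t - tP m n a t s) * |x s| := by
    nlinarith [ineq1]
  have e2 : (|lam| - tP m n a s t) * |x s| ≤ (tR m n a s - tP m n a s t) * |x t| := by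
    nlinarith [ineq2]
  rcases le_or_gt (tP m n a t s) |lam| with hPt | hPt <;>
    rcases le_or_gt (tP m n a s t) |lam| with hPs | hPs
  · have hmul := mul_le_mul e1 e2 (mul_nonneg (by linarith) hs.le)
      (mul_nonneg (by linarith) hs.le)
    have hpos : 0 < |x t| * |x s| := mul_pos hct0 hs
    have h3 : (|lam| - tP m n a t s) * (|lam| - tP m n a s t) * (|x t| * |x s|) ≤
        (tR m n a t - tP m n a t s) * (tR m n a s - tP m n a s t) * (|x t| * |x s|) := by
      nlinarith [hmul]
    exact le_of_mul_le_mul_right h3 hpos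
  · have hL : (|lam| - tP m n a t s) * (|lam| - tP m n a s t) ≤ 0 :=
      mul_nonpos_of_nonneg_of_nonpos (by linarith) (by linarith)
    have hR : 0 ≤ (tR m n a t - tP m n a t s) * (tR m n a s - tP m n a s t) :=
      mul_nonneg (by linarith) (by linarith)
    linarith
  · have hL : (|lam| - tP m n a t s) * (|lam| - tP m n a s t) ≤ 0 :=
      mul_nonpos_of_nonpos_of_nonneg (by linarith) (by linarith)
    have hR : 0 ≤ (tR m n a t - tP m n a t s) * (tR m n a s - tP m n a s t) :=
      mul_nonneg (by linarith) (by linarith)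
    linarith
  · rcases hl with h | h <;> linarith
end

section
/- Let A = (a_{i_1...i_m}) be a real tensor of order m and dimension n (m, n ≥ 2), let λ be a Z-eigenvalue of A with Z-eigenvector x ∈ ℝⁿ, and let t, s ∈ N be distinct indices such that |x_t| ≥ |x_s| ≥ |x_i| for all i ∈ N with i ∉ {t, s}. If x_s = 0, then |λ| ≤ P_t^s(A). -/
open Finset

theorem xs_zero_bound (m n : ℕ) (hm : 2 ≤ m) (hn : 2 ≤ n)
    (a : Fin n → (Fin (m-1) → Fin n) → ℝ) (lam : ℝ) (x : Fin n → ℝ)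
    (hx : IsZEigenpair m n a lam x) (t s : Fin n) (hts : t ≠ s)
    (h1 : |x s| ≤ |x t|) (h2 : ∀ i, i ≠ t → i ≠ s → |x i| ≤ |x s|)
    (hs : x s = 0) :
    |lam| ≤ tP m n a t s := by
  obtain ⟨heig, hnorm⟩ := hx
  -- x vanishes off t
  have hzero : ∀ i, i ≠ t → x i = 0 := by
    intro i hi
    by_cases his : i = s
    · rw [his]; exact hs
    · have := h2 i hi his
      rw [hs, abs_zero] at this
      exact abs_nonpos_iff.mp this
  -- |x t| = 1
  have hxt : x t ^ 2 = 1 := by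
    have : ∑ i, x i ^ 2 = x t ^ 2 := by
      apply Finset.sum_eq_single
      · intro i _ hi; rw [hzero i hi]; ring
      · intro h; exact absurd (Finset.mem_univ t) h
    rw [← this]; exact hnorm
  have habs : |x t| = 1 := by
    have := sq_abs (x t)
    nlinarith [abs_nonneg (x t)]
  -- the eigen equation at t
  set g₀ : Fin (m-1) → Fin n := fun _ => t with hg₀
  have hsum : tAx m n a x t = a t g₀ * x t ^ (m-1) := by
    unfold tAx
    rw [Finset.sum_eq_single g₀]
    · simp [hg₀, Finset.prod_const]
    · intro g _ hg
      have : ∃ k, g k ≠ t := by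
        by_contra hc
        push_neg at hc
        exact hg (funext hc)
      obtain ⟨k, hk⟩ := this
      have : x (g k) = 0 := hzero _ hk
      rw [Finset.prod_eq_zero (Finset.mem_univ k) this, mul_zero]
    · intro h; exact absurd (Finset.mem_univ g₀) h
  have heq : lam * x t = a t g₀ * x t ^ (m-1) := by rw [← heig t, hsum]
  have hlam : |lam| = |a t g₀| := by
    have := congrArg abs heq
    rw [abs_mul, abs_mul, abs_pow, habs] at this
    simpa using this
  rw [hlam]
  unfold tP
  apply Finset.single_le_sum (f := fun g => |a t g|)
  · intro g _; exact abs_nonneg _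
  · simp [hg₀, hts]
end
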